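/- arXiv:1707.06517 — 2 statements merged into one kernel-verified Lean document; each statement's English description precedes it below -/
import Mathlib

section
/- For every ε ∈ (0, 1/16) there exists a constant C > 0 such that for every sufficiently large prime p, every primitive root τ mod p, and every integer s with 1 ≤ s ≤ p−1, one has |∑_{1 ≤ n ≤ p−1, gcd(n,p−1)=1} e(s·τⁿ/p)| ≤ C · p^{1−ε}. -/
/-!
Möbius inversion of the condition `gcd(n, p-1) = 1` writes the sum as `∑_{d ∣ p-1} μ(d) S_d`,
where `S_d` is the sum of `e(s x / p)` over the subgroup `H_d` of `d`-th powers in `(ℤ/p)ˣ`.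
Since `S_d` does not change when `s` is multiplied by an element of `H_d`, Parseval
`∑_t |∑_{x ∈ H} e(t x / p)|² = p |H|` gives `|H_d| |S_d|² ≤ p |H_d|`, i.e. `|S_d| ≤ √p`.
Only squarefree `d` contribute, and there are `2^ω(p-1) ≤ 16 (p-1)^{1/3}` of them, so the sum is
at most `16 p^{5/6}`.
-/

open Finset ArithmeticFunction ComplexConjugate
open scoped ArithmeticFunction.Moebius

namespace ArithmeticFunction

theorem sum_divisors_moebius (n : ℕ) : ∑ d ∈ n.divisors, μ d = if n = 1 then 1 else 0 := by
  simpa only [coe_mul_zeta_apply, one_apply] using congrArg (· n) moebius_mul_coe_zeta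

theorem sum_filter_gcd_eq_one_eq_sum_moebius_smul {M : Type*} [AddCommGroup M] {N : ℕ}
    (hN : N ≠ 0) (s : Finset ℕ) (f : ℕ → M) :
    ∑ n ∈ s with n.gcd N = 1, f n = ∑ d ∈ N.divisors, μ d • ∑ n ∈ s with d ∣ n, f n := by
  have hgcd : ∀ n, {d ∈ N.divisors | d ∣ n} = (n.gcd N).divisors := fun n => by
    ext d
    have := Nat.gcd_ne_zero_right (m := n) hN
    simp only [mem_filter, Nat.mem_divisors, Nat.dvd_gcd_iff]
    tauto
  simp_rw [smul_sum, sum_filter]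
  rw [sum_comm]
  refine sum_congr rfl fun n _ => ?_
  rw [← sum_filter, ← sum_smul, hgcd, sum_divisors_moebius, ite_smul, one_smul, zero_smul]

theorem norm_sum_moebius_smul_le {E : Type*} [SeminormedAddCommGroup E]
    {N : ℕ} {T : ℕ → E} {B : ℝ} (hT : ∀ d ∈ N.divisors, ‖T d‖ ≤ B) :
    ‖∑ d ∈ N.divisors, μ d • T d‖ ≤ #{d ∈ N.divisors | Squarefree d} * B := by
  rw [← nsmul_eq_mul, ← sum_const, sum_filter]
  refine (norm_sum_le _ _).trans (sum_le_sum fun d hd => ?_)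
  refine (norm_zsmul_le _ _).trans ?_
  rw [Int.norm_eq_abs, ← Int.cast_abs, abs_moebius]
  split_ifs <;> simp [hT d hd]

end ArithmeticFunction

namespace Nat

theorem card_divisors_filter_squarefree {n : ℕ} (hn : n ≠ 0) :
    #{d ∈ n.divisors | Squarefree d} = 2 ^ #n.primeFactors := by
  rw [card_eq_sum_ones, sum_divisors_filter_squarefree hn, sum_const, smul_eq_mul, mul_one,
    card_powerset, factors_eq, List.toFinset_coe, primeFactors]

theorem eight_pow_card_primeFactors_le {n : ℕ} (hn : n ≠ 0) :
    8 ^ #n.primeFactors ≤ 8 ^ 4 * n := by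
  have hsmall : #{q ∈ n.primeFactors | q < 8} ≤ 4 := by
    refine (card_le_card (t := {2, 3, 5, 7}) fun q hq => ?_).trans (by decide)
    simp only [mem_filter, mem_primeFactors] at hq
    obtain ⟨⟨hq, -⟩, hq8⟩ := hq
    interval_cases q <;> simp_all +decide
  have hlarge : 8 ^ #{q ∈ n.primeFactors | ¬q < 8} ≤ n :=
    calc 8 ^ #{q ∈ n.primeFactors | ¬q < 8}
        ≤ ∏ q ∈ n.primeFactors with ¬q < 8, q :=
          pow_card_le_prod _ _ _ fun q hq => not_lt.mp (mem_filter.mp hq).2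
      _ ≤ ∏ q ∈ n.primeFactors, q :=
          prod_le_prod_of_subset_of_one_le' (filter_subset _ _)
            fun q hq _ => (prime_of_mem_primeFactors hq).one_lt.le
      _ ≤ n := le_of_dvd (pos_of_ne_zero hn) (prod_primeFactors_dvd n)
  rw [← card_filter_add_card_filter_not (fun q => q < 8), pow_add]
  exact Nat.mul_le_mul (Nat.pow_le_pow_right (by norm_num) hsmall) hlarge

theorem card_divisors_filter_squarefree_le (n : ℕ) :
    (#{d ∈ n.divisors | Squarefree d} : ℝ) ≤ 16 * (n : ℝ) ^ (1 / 3 : ℝ) := by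
  rcases eq_or_ne n 0 with rfl | hn
  · simp
  have hcube : (2 ^ #n.primeFactors) ^ 3 ≤ 8 ^ 4 * n := by
    rw [← pow_mul, mul_comm, pow_mul]
    exact eight_pow_card_primeFactors_le hn
  calc (#{d ∈ n.divisors | Squarefree d} : ℝ) = ((2 ^ #n.primeFactors : ℕ) : ℝ) := by
        rw [card_divisors_filter_squarefree hn]
    _ ≤ ((8 ^ 4 * n : ℕ) : ℝ) ^ (3⁻¹ : ℝ) :=
        (Real.le_rpow_inv_iff_of_pos (by positivity) (by positivity) three_pos).mpr
          (by rw [Real.rpow_ofNat]; exact_mod_cast hcube)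
    _ = 16 * (n : ℝ) ^ (1 / 3 : ℝ) := by
        rw [one_div, cast_mul, Real.mul_rpow (by positivity) (by positivity)]
        norm_num [show (4096 : ℝ) = 16 ^ 3 by norm_num, Real.pow_rpow_inv_natCast]

end Nat

namespace Finset

theorem sum_Icc_one_eq_sum_range_of_eq {M : Type*} [AddCommMonoid M] {g : ℕ → M} {k : ℕ}
    (h : g k = g 0) : ∑ m ∈ Icc 1 k, g m = ∑ m ∈ range k, g m := by
  cases k with
  | zero => simp
  | succ k =>
    rw [sum_range_succ', ← h, ← Ico_add_one_right_eq_Icc, sum_Ico_eq_sum_range,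
      Nat.add_sub_cancel, sum_range_succ]
    simp only [add_comm 1]

theorem sum_Icc_filter_dvd_eq_sum_Icc_div {M : Type*} [AddCommMonoid M] (g : ℕ → M)
    {d N : ℕ} (hd : d ∣ N) :
    ∑ n ∈ Icc 1 N with d ∣ n, g n = ∑ m ∈ Icc 1 (N / d), g (d * m) := by
  rcases Nat.eq_zero_or_pos d with rfl | hd0
  · simp [Nat.eq_zero_of_zero_dvd hd]
  obtain ⟨k, rfl⟩ := hd
  rw [Nat.mul_div_cancel_left k hd0, ← sum_image fun _ _ _ _ => Nat.eq_of_mul_eq_mul_left hd0]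
  congr 1
  ext n
  simp only [mem_filter, mem_Icc, mem_image]
  constructor
  · rintro ⟨⟨hn1, hnk⟩, m, rfl⟩
    exact ⟨m, ⟨Nat.pos_of_mul_pos_left hn1, Nat.le_of_mul_le_mul_left hnk hd0⟩, rfl⟩
  · rintro ⟨m, ⟨hm1, hmk⟩, rfl⟩
    exact ⟨⟨Nat.mul_pos hd0 hm1, Nat.mul_le_mul_left d hmk⟩, dvd_mul_right d m⟩

end Finset

section Group

variable {G M : Type*} [Group G] [AddCommMonoid M]

theorem IsOfFinOrder.sum_Icc_orderOf_eq_sum_zpowers {x : G} (hx : IsOfFinOrder x)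
    [Fintype (Subgroup.zpowers x)] (f : G → M) :
    ∑ m ∈ Icc 1 (orderOf x), f (x ^ m) = ∑ y : Subgroup.zpowers x, f y := by
  rw [sum_Icc_one_eq_sum_range_of_eq (by rw [pow_orderOf_eq_one, pow_zero]),
    ← Fin.sum_univ_eq_sum_range (fun m => f (x ^ m)), ← (finEquivZPowers hx).sum_comp]
  rfl

theorem sum_Icc_filter_dvd_pow_eq_sum_zpowers [Fintype G] (f : G → M) {x : G} {d : ℕ}
    (hd : d ∣ orderOf x) :
    ∑ n ∈ Icc 1 (orderOf x) with d ∣ n, f (x ^ n) = ∑ y : Subgroup.zpowers (x ^ d), f y := by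
  have hd0 : d ≠ 0 := by rintro rfl; exact (orderOf_pos x).ne' (Nat.eq_zero_of_zero_dvd hd)
  rw [sum_Icc_filter_dvd_eq_sum_Icc_div _ hd, ← orderOf_pow_of_dvd hd0 hd,
    ← (isOfFinOrder_of_finite (x ^ d)).sum_Icc_orderOf_eq_sum_zpowers]
  simp only [pow_mul]

end Group

namespace AddChar

variable {R : Type*} [CommRing R] [Fintype R] {ψ : AddChar R ℂ}

theorem sum_norm_sum_mul_sq (hψ : ψ.IsPrimitive) {ι : Type*} [Fintype ι]
    {e : ι → R} (he : Function.Injective e) :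
    ∑ t : R, ‖∑ i, ψ (t * e i)‖ ^ 2 = Fintype.card R * Fintype.card ι := by
  classical
  have hpair : ∀ t i j, ψ (t * e i) * conj (ψ (t * e j)) = ψ (t * (e i - e j)) := fun t i j => by
    rw [← map_neg_eq_conj, ← map_add_eq_mul, mul_sub, sub_eq_add_neg]
  have horth : ∀ i j, ∑ t : R, ψ (t * (e i - e j)) = if i = j then (Fintype.card R : ℂ) else 0 :=
    fun i j => by rw [sum_mulShift _ hψ, sub_eq_zero, he.eq_iff, Nat.cast_ite, Nat.cast_zero]
  apply Complex.ofReal_injective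
  push_cast
  simp_rw [← Complex.mul_conj', map_sum, sum_mul_sum, hpair]
  rw [sum_comm]
  simp_rw [sum_comm (γ := R), horth, sum_ite_eq, mem_univ, if_true, sum_const, card_univ,
    nsmul_eq_mul, mul_comm]

theorem norm_sum_subgroup_le_sqrt_card (hψ : ψ.IsPrimitive) (σ : Rˣ) (H : Subgroup Rˣ)
    [Fintype H] : ‖∑ h : H, ψ ((σ * h : Rˣ) : R)‖ ≤ √(Fintype.card R) := by
  set F : R → ℂ := fun t => ∑ h : H, ψ (t * (h : Rˣ))
  have hinv : ∀ k : H, F ((σ * k : Rˣ) : R) = F σ := fun k => by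
    simpa [F, mul_assoc] using Equiv.sum_comp (Equiv.mulLeft k) fun h : H => ψ (σ * (h : Rˣ))
  have hemb : Function.Injective fun k : H => ((σ * k : Rˣ) : R) :=
    Units.val_injective.comp ((mul_right_injective σ).comp Subtype.val_injective)
  have key : Fintype.card H * ‖F σ‖ ^ 2 ≤ Fintype.card H * Fintype.card R :=
    calc Fintype.card H * ‖F σ‖ ^ 2 = ∑ k : H, ‖F ((σ * k : Rˣ) : R)‖ ^ 2 := by
          simp only [hinv, sum_const, card_univ, nsmul_eq_mul]
      _ ≤ ∑ t : R, ‖F t‖ ^ 2 := by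
          simpa using sum_le_univ_sum_of_nonneg (s := univ.map ⟨_, hemb⟩)
            (f := fun t => ‖F t‖ ^ 2) fun t => by positivity
      _ = Fintype.card H * Fintype.card R :=
          (sum_norm_sum_mul_sq hψ (e := fun h : H => ((h : Rˣ) : R))
            (Units.val_injective.comp Subtype.val_injective)).trans (mul_comm _ _)
  have hsq := le_of_mul_le_mul_left key (by exact_mod_cast Fintype.card_pos)
  simpa [F] using Real.le_sqrt_of_sq_le hsq

theorem norm_sum_gcd_eq_one_pow_le (hψ : ψ.IsPrimitive) (σ u : Rˣ) :
    ‖∑ n ∈ Icc 1 (orderOf u) with n.gcd (orderOf u) = 1, ψ ((σ * u ^ n : Rˣ) : R)‖ ≤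
      #{d ∈ (orderOf u).divisors | Squarefree d} * √(Fintype.card R) := by
  classical
  rw [sum_filter_gcd_eq_one_eq_sum_moebius_smul (orderOf_pos u).ne']
  refine norm_sum_moebius_smul_le fun d hd => ?_
  rw [sum_Icc_filter_dvd_pow_eq_sum_zpowers (fun x => ψ ((σ * x : Rˣ) : R))
    (Nat.dvd_of_mem_divisors hd)]
  exact norm_sum_subgroup_le_sqrt_card hψ σ _

end AddChar

theorem Real.rpow_one_third_mul_sqrt_le_rpow {x y ε : ℝ} (hx : 0 ≤ x) (hxy : x ≤ y) (hy : 1 ≤ y)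
    (hε : ε ≤ 1 / 6) : x ^ (1 / 3 : ℝ) * √y ≤ y ^ (1 - ε) :=
  calc x ^ (1 / 3 : ℝ) * √y ≤ y ^ (1 / 3 : ℝ) * y ^ (1 / 2 : ℝ) := by
        rw [sqrt_eq_rpow]
        gcongr
    _ = y ^ (1 / 3 + 1 / 2 : ℝ) := (rpow_add (by positivity) _ _).symm
    _ ≤ y ^ (1 - ε) := rpow_le_rpow_of_exponent_le hy (by linarith)

theorem exponential_sum_primitive_root_strong_bound_general (ε : ℝ) (hε' : ε < 1/16) :
    ∃ C > (0:ℝ), ∃ p₀ : ℕ, ∀ p : ℕ, p.Prime → p₀ ≤ p →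
      ∀ τ : ℤ, orderOf ((τ : ZMod p)) = p - 1 →
      ∀ s : ℤ, 1 ≤ s → s ≤ (p:ℤ) - 1 →
      ‖(∑ n ∈ (Finset.Icc 1 (p-1)).filter (fun n => Nat.gcd n (p-1) = 1),
          Complex.exp (2 * Real.pi * Complex.I * ((s:ℂ) * (τ:ℂ) ^ n / (p:ℂ))))‖
        ≤ C * (p:ℝ) ^ (1 - ε) := by
  refine ⟨16, by norm_num, 0, fun p hp _ τ hτ s hs1 hs2 => ?_⟩
  have := Fact.mk hp
  obtain ⟨u, hu⟩ : IsUnit (τ : ZMod p) :=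
    (orderOf_pos_iff.mp (hτ ▸ Nat.sub_pos_of_lt hp.one_lt)).isUnit
  obtain ⟨σ, hσ⟩ : IsUnit (s : ZMod p) := by
    refine Ne.isUnit fun h => ?_
    have := Int.le_of_dvd (by omega) ((ZMod.intCast_zmod_eq_zero_iff_dvd s p).mp h)
    omega
  have hterm (n : ℕ) : Complex.exp (2 * Real.pi * Complex.I * ((s:ℂ) * (τ:ℂ) ^ n / (p:ℂ))) =
      ZMod.stdAddChar ((σ * u ^ n : (ZMod p)ˣ) : ZMod p) := by
    have := ZMod.stdAddChar_coe (N := p) (s * τ ^ n)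
    push_cast at this
    rw [Units.val_mul, Units.val_pow_eq_pow_val, hσ, hu, this, ← mul_div_assoc]
  rw [← hu, orderOf_units] at hτ
  simp_rw [hterm, ← hτ]
  calc _ ≤ _ := AddChar.norm_sum_gcd_eq_one_pow_le (ZMod.isPrimitive_stdAddChar p) σ u
    _ ≤ 16 * ((p - 1 : ℕ) : ℝ) ^ (1 / 3 : ℝ) * √p := by
      rw [hτ, ZMod.card]
      gcongr
      exact Nat.card_divisors_filter_squarefree_le _
    _ ≤ 16 * (p : ℝ) ^ (1 - ε) := by
      rw [mul_assoc]
      gcongr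
      exact Real.rpow_one_third_mul_sqrt_le_rpow (by positivity)
        (by exact_mod_cast Nat.sub_le p 1) (by exact_mod_cast hp.one_lt.le) (by linarith)

/-- For every `ε ∈ (0, 1/16)` there is `C > 0` such that for every sufficiently large prime
`p`, every primitive root `τ` mod `p`, and every integer `s` with `1 ≤ s ≤ p−1`:
`|∑_{1 ≤ n ≤ p−1, gcd(n,p−1)=1} e(s·τⁿ/p)| ≤ C · p^{1−ε}`. -/
theorem exponential_sum_primitive_root_strong_bound (ε : ℝ) (hε : 0 < ε) (hε' : ε < 1/16) :
    ∃ C > (0:ℝ), ∃ p₀ : ℕ, ∀ p : ℕ, p.Prime → p₀ ≤ p →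
      ∀ τ : ℤ, orderOf ((τ : ZMod p)) = p - 1 →
      ∀ s : ℤ, 1 ≤ s → s ≤ (p:ℤ) - 1 →
      ‖(∑ n ∈ (Finset.Icc 1 (p-1)).filter (fun n => Nat.gcd n (p-1) = 1),
          Complex.exp (2 * Real.pi * Complex.I * ((s:ℂ) * (τ:ℂ) ^ n / (p:ℂ))))‖
        ≤ C * (p:ℝ) ^ (1 - ε) :=
  exponential_sum_primitive_root_strong_bound_general ε hε'
end

section
/- For every ε > 0 there exists a constant C > 0 such that for every prime p, every primitive root τ mod p, and every integer s with 1 ≤ s ≤ p−1, one has |∑_{1 ≤ n ≤ p−1, gcd(n,p−1)=1} e(s·τⁿ/p)| ≤ C · p^{1/2+ε} · log p. -/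
/-!
Möbius inversion over the divisors `d` of `N = p - 1` turns the sum over exponents coprime to `N`
into a signed sum, over squarefree `d ∣ N`, of sums of `e(s τ^(d m) / p)` over a full period of
`τ ^ d`, i.e. of Gaussian periods `η(y) = ∑_{h ∈ H} e(y h / p)` of the subgroup `H` generated by
`τ ^ d`. Such a period is constant on the coset `s H`, while orthogonality of additive characters
gives `∑_y |η(y)|² = p |H|`; hence `|η(s)| ≤ √p` for `s ≠ 0`. The sum is therefore at most
`2 ^ ω(p - 1) √p`, and `2 ^ ω(N) ≪_ε N ^ ε`.
-/

open Finset ArithmeticFunction ArithmeticFunction.Moebius ZMod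

lemma sum_Icc_orderOf_pow_eq_sum_zpowers {G M : Type*} [Group G] [AddCommMonoid M] {g : G}
    (hg : IsOfFinOrder g) [Fintype (Subgroup.zpowers g)] (f : G → M) :
    ∑ m ∈ Icc 1 (orderOf g), f (g ^ m) = ∑ h : Subgroup.zpowers g, f h :=
  calc ∑ m ∈ Icc 1 (orderOf g), f (g ^ m)
      = ∑ i : Fin (orderOf g), f (g * g ^ (i : ℕ)) := by
        rw [← Ico_add_one_right_eq_Icc, sum_Ico_eq_sum_range, Nat.add_sub_cancel, sum_range]
        simp only [pow_add, pow_one]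
    _ = ∑ h : Subgroup.zpowers g, f (g * h) :=
        Fintype.sum_equiv (finEquivZPowers hg) _ _ fun i => rfl
    _ = ∑ h : Subgroup.zpowers g, f h :=
        Fintype.sum_equiv (Equiv.mulLeft ⟨g, Subgroup.mem_zpowers g⟩) _ _ fun h => rfl

namespace Nat

lemma sum_Icc_filter_dvd {M : Type*} [AddCommMonoid M] {d : ℕ} (hd : 0 < d) (N : ℕ)
    (f : ℕ → M) : ∑ n ∈ Icc 1 N with d ∣ n, f n = ∑ m ∈ Icc 1 (N / d), f (d * m) := by
  refine (sum_nbij' (d * ·) (· / d) (fun m hm => ?_) (fun n hn => ?_) (fun m _ => ?_)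
    (fun n hn => ?_) fun _ _ => rfl).symm
  · simp only [mem_Icc, mem_filter] at hm ⊢
    exact ⟨⟨Nat.mul_pos hd hm.1, mul_comm m d ▸ (Nat.le_div_iff_mul_le hd).mp hm.2⟩,
      dvd_mul_right d m⟩
  · simp only [mem_Icc, mem_filter] at hn ⊢
    obtain ⟨⟨hn1, hnN⟩, hdn⟩ := hn
    exact ⟨(Nat.le_div_iff_mul_le hd).mpr (by simpa using Nat.le_of_dvd hn1 hdn),
      Nat.div_le_div_right hnN⟩
  · exact Nat.mul_div_cancel_left m hd
  · exact Nat.mul_div_cancel' (mem_filter.mp hn).2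

lemma card_divisors_filter_squarefree_le_s6 (N : ℕ) :
    #{d ∈ N.divisors | Squarefree d} ≤ 2 ^ #N.primeFactors := by
  rw [← card_powerset]
  refine card_le_card_of_injOn Nat.primeFactors (fun d hd => ?_) fun d₁ hd₁ d₂ hd₂ h => ?_
  · simp only [coe_filter, Set.mem_ofPred_eq, mem_divisors] at hd
    exact mem_powerset.mpr (Nat.primeFactors_mono hd.1.1 hd.1.2)
  · simp only [coe_filter, Set.mem_ofPred_eq] at hd₁ hd₂
    rw [← Nat.prod_primeFactors_of_squarefree hd₁.2, ← Nat.prod_primeFactors_of_squarefree hd₂.2,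
      h]

/-- The primes below `B` contribute at most `2 ^ B`; every prime `q ≥ B` has `2 ≤ q ^ ε`, and
the product of these primes divides `N`. -/
lemma exists_two_pow_card_primeFactors_le {ε : ℝ} (hε : 0 < ε) :
    ∃ C > (0 : ℝ), ∀ N : ℕ, N ≠ 0 → (2 : ℝ) ^ #N.primeFactors ≤ C * (N : ℝ) ^ ε := by
  obtain ⟨B, hB⟩ := exists_nat_gt ((2 : ℝ) ^ ε⁻¹)
  have two_le_rpow {q : ℕ} (hq : B ≤ q) : (2 : ℝ) ≤ (q : ℝ) ^ ε :=
    calc (2 : ℝ) = ((2 : ℝ) ^ ε⁻¹) ^ ε := by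
          rw [← Real.rpow_mul zero_le_two, inv_mul_cancel₀ hε.ne', Real.rpow_one]
      _ ≤ (q : ℝ) ^ ε := Real.rpow_le_rpow (by positivity)
          (hB.le.trans (by exact_mod_cast hq)) hε.le
  refine ⟨2 ^ B, by positivity, fun N hN => ?_⟩
  rw [← card_filter_add_card_filter_not (· < B), pow_add]
  have small : (2 : ℝ) ^ #{q ∈ N.primeFactors | q < B} ≤ 2 ^ B :=
    pow_le_pow_right₀ one_le_two
      ((card_le_card fun q hq => mem_range.mpr (mem_filter.mp hq).2).trans (card_range B).le)
  have large : (2 : ℝ) ^ #{q ∈ N.primeFactors | ¬q < B} ≤ (N : ℝ) ^ ε :=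
    calc (2 : ℝ) ^ #{q ∈ N.primeFactors | ¬q < B}
        = ∏ q ∈ N.primeFactors with ¬q < B, (2 : ℝ) := (prod_const _).symm
      _ ≤ ∏ q ∈ N.primeFactors with ¬q < B, (q : ℝ) ^ ε :=
          prod_le_prod (fun _ _ => zero_le_two) fun q hq =>
            two_le_rpow (not_lt.mp (mem_filter.mp hq).2)
      _ = ((∏ q ∈ N.primeFactors with ¬q < B, q : ℕ) : ℝ) ^ ε := by
          rw [Nat.cast_prod, Real.finsetProd_rpow _ _ fun _ _ => by positivity]
      _ ≤ (N : ℝ) ^ ε := by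
          refine Real.rpow_le_rpow (by positivity) ?_ hε.le
          exact_mod_cast Nat.le_of_dvd (Nat.pos_of_ne_zero hN)
            ((prod_dvd_prod_of_subset _ _ _ (filter_subset _ _)).trans N.prod_primeFactors_dvd)
  exact mul_le_mul small large (by positivity) (by positivity)

lemma sum_filter_coprime_eq_sum_moebius_smul {M : Type*} [AddCommGroup M] {N : ℕ}
    (hN : N ≠ 0) (s : Finset ℕ) (f : ℕ → M) :
    ∑ n ∈ s with n.Coprime N, f n = ∑ d ∈ N.divisors, μ d • ∑ n ∈ s with d ∣ n, f n := by
  have sum_moebius (n : ℕ) :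
      ∑ d ∈ N.divisors with d ∣ n, μ d = if n.Coprime N then 1 else 0 := by
    have : {d ∈ N.divisors | d ∣ n} = (n.gcd N).divisors := by
      ext d
      simp [Nat.dvd_gcd_iff, hN, and_comm]
    rw [this, ← coe_mul_zeta_apply, moebius_mul_coe_zeta, one_apply]
  calc ∑ n ∈ s with n.Coprime N, f n
      = ∑ n ∈ s, (∑ d ∈ N.divisors with d ∣ n, μ d) • f n := by
        simp_rw [sum_moebius, ite_smul, one_smul, zero_smul, sum_ite, sum_const_zero, add_zero]
    _ = ∑ d ∈ N.divisors, μ d • ∑ n ∈ s with d ∣ n, f n := by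
        simp_rw [sum_filter, sum_smul, smul_sum, ite_smul, zero_smul, smul_ite, smul_zero]
        exact sum_comm

lemma norm_sum_moebius_smul_le {E : Type*} [SeminormedAddCommGroup E] {N : ℕ} {a : ℕ → E}
    {M : ℝ} (ha : ∀ d ∈ N.divisors, ‖a d‖ ≤ M) :
    ‖∑ d ∈ N.divisors, μ d • a d‖ ≤ #{d ∈ N.divisors | Squarefree d} * M := by
  have squarefree_support : ∑ d ∈ N.divisors, μ d • a d
      = ∑ d ∈ N.divisors with Squarefree d, μ d • a d :=
    (sum_filter_of_ne fun d _ hd => by_contra fun hsq => hd <| by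
      rw [moebius_eq_zero_of_not_squarefree hsq, zero_smul]).symm
  calc ‖∑ d ∈ N.divisors, μ d • a d‖
      ≤ ∑ d ∈ N.divisors with Squarefree d, M := by
        refine squarefree_support ▸ (norm_sum_le _ _).trans (sum_le_sum fun d hd => ?_)
        refine (norm_zsmul_le _ _).trans ?_
        rw [Int.norm_eq_abs]
        exact (mul_le_of_le_one_left (norm_nonneg _) (mod_cast abs_moebius_le_one)).trans
          (ha d (mem_filter.mp hd).1)
    _ = _ := by rw [sum_const, nsmul_eq_mul]

end Nat

namespace AddChar

variable {F : Type*} [Field F] {ψ : AddChar F ℂ}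

noncomputable def gaussianPeriod (ψ : AddChar F ℂ) (H : Subgroup Fˣ) [Fintype H] (y : F) : ℂ :=
  ∑ h : H, ψ (y * (h : Fˣ))

variable (H : Subgroup Fˣ) [Fintype H]

lemma gaussianPeriod_mul_of_mem (y : F) {h₀ : Fˣ} (h₀H : h₀ ∈ H) :
    gaussianPeriod ψ H (y * h₀) = gaussianPeriod ψ H y :=
  Fintype.sum_equiv (Equiv.mulLeft ⟨h₀, h₀H⟩) _ _ fun h => by simp [mul_assoc]

lemma sum_norm_sq_gaussianPeriod [Fintype F] [DecidableEq F] (hψ : ψ.IsPrimitive) :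
    ∑ y, ‖gaussianPeriod ψ H y‖ ^ 2 = Fintype.card F * Fintype.card H := by
  apply Complex.ofReal_injective
  push_cast
  have orthogonality (h h' : H) :
      ∑ y : F, ψ (y * ((h : Fˣ) - (h' : Fˣ) : F)) = if h = h' then (Fintype.card F : ℂ) else 0 :=
        by
    simp [sum_mulShift _ hψ, sub_eq_zero, Units.val_inj]
  calc ∑ y, (‖gaussianPeriod ψ H y‖ ^ 2 : ℂ)
      = ∑ y, ∑ h : H, ∑ h' : H, ψ (y * ((h : Fˣ) - (h' : Fˣ) : F)) := by
        refine sum_congr rfl fun y _ => ?_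
        rw [← Complex.mul_conj', gaussianPeriod, map_sum, sum_mul_sum]
        refine sum_congr rfl fun h _ => sum_congr rfl fun h' _ => ?_
        rw [← map_neg_eq_conj, ← map_add_eq_mul, mul_sub, sub_eq_add_neg]
    _ = Fintype.card F * Fintype.card H := by
        rw [sum_comm]
        simp_rw [sum_comm (s := univ (α := F)), orthogonality, sum_ite_eq, if_pos (mem_univ _),
          sum_const, card_univ, nsmul_eq_mul, mul_comm]

theorem norm_gaussianPeriod_le [Fintype F] (hψ : ψ.IsPrimitive) {s : F} (hs : s ≠ 0) :
    ‖gaussianPeriod ψ H s‖ ≤ √(Fintype.card F) := by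
  classical
  have orbit_le : (Fintype.card H : ℝ) * ‖gaussianPeriod ψ H s‖ ^ 2
      ≤ ∑ y, ‖gaussianPeriod ψ H y‖ ^ 2 :=
    calc (Fintype.card H : ℝ) * ‖gaussianPeriod ψ H s‖ ^ 2
        = ∑ h : H, ‖gaussianPeriod ψ H (s * (h : Fˣ))‖ ^ 2 := by
          simp [gaussianPeriod_mul_of_mem H s (SetLike.coe_mem _)]
      _ = ∑ y ∈ univ.image (fun h : H => s * (h : Fˣ)), ‖gaussianPeriod ψ H y‖ ^ 2 := by
          rw [sum_image fun a _ b _ hab => Subtype.ext (Units.ext (by simpa [hs] using hab))]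
      _ ≤ ∑ y, ‖gaussianPeriod ψ H y‖ ^ 2 :=
          sum_le_sum_of_subset_of_nonneg (subset_univ _) fun _ _ _ => by positivity
  have hH : (0 : ℝ) < Fintype.card H := by exact_mod_cast Fintype.card_pos
  rw [sum_norm_sq_gaussianPeriod H hψ] at orbit_le
  exact Real.le_sqrt_of_sq_le (by nlinarith)

theorem norm_sum_Icc_orderOf_pow_le [Fintype F] (hψ : ψ.IsPrimitive) (g : Fˣ) {s : F}
    (hs : s ≠ 0) : ‖∑ m ∈ Icc 1 (orderOf g), ψ (s * (g : F) ^ m)‖ ≤ √(Fintype.card F) := by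
  classical
  simp_rw [← Units.val_pow_eq_pow_val]
  rw [sum_Icc_orderOf_pow_eq_sum_zpowers (isOfFinOrder_of_finite g) fun u : Fˣ => ψ (s * u)]
  exact norm_gaussianPeriod_le _ hψ hs

theorem norm_sum_coprime_pow_le [Fintype F] (hψ : ψ.IsPrimitive) (g : Fˣ) {s : F}
    (hs : s ≠ 0) :
    ‖∑ n ∈ Icc 1 (orderOf g) with n.Coprime (orderOf g), ψ (s * (g : F) ^ n)‖
      ≤ #{d ∈ (orderOf g).divisors | Squarefree d} * √(Fintype.card F) := by
  have hN : orderOf g ≠ 0 := (orderOf_pos g).ne'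
  rw [Nat.sum_filter_coprime_eq_sum_moebius_smul hN]
  refine Nat.norm_sum_moebius_smul_le fun d hd => ?_
  obtain ⟨hdN, -⟩ := Nat.mem_divisors.mp hd
  have hd0 : d ≠ 0 := ne_zero_of_dvd_ne_zero hN hdN
  rw [Nat.sum_Icc_filter_dvd (Nat.pos_of_ne_zero hd0), ← orderOf_pow_of_dvd hd0 hdN]
  simpa [pow_mul] using norm_sum_Icc_orderOf_pow_le hψ (g ^ d) hs

end AddChar

lemma ZMod.norm_sum_coprime_exp_le {p : ℕ} [Fact p.Prime] {τ s : ℤ}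
    (hτ : orderOf (τ : ZMod p) = p - 1) (hs : (s : ZMod p) ≠ 0) :
    ‖∑ n ∈ Icc 1 (p - 1) with n.Coprime (p - 1),
        Complex.exp (2 * Real.pi * Complex.I * (s * τ ^ n / p))‖
      ≤ 2 ^ #(p - 1).primeFactors * √p := by
  have hτ0 : (τ : ZMod p) ≠ 0 := fun h => by
    have := (Fact.out : p.Prime).two_le
    rw [h, orderOf_zero] at hτ
    omega
  set g := Units.mk0 (τ : ZMod p) hτ0
  have hg : orderOf g = p - 1 := by rw [← orderOf_units, Units.val_mk0, hτ]
  have exp_eq (n : ℕ) : Complex.exp (2 * Real.pi * Complex.I * (s * τ ^ n / p))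
      = stdAddChar ((s : ZMod p) * (g : ZMod p) ^ n) := by
    rw [Units.val_mk0, ← Int.cast_pow (R := ZMod p), ← Int.cast_mul, stdAddChar_coe]
    push_cast
    ring_nf
  simp_rw [exp_eq, ← hg]
  refine (AddChar.norm_sum_coprime_pow_le (isPrimitive_stdAddChar p) g hs).trans ?_
  rw [ZMod.card]
  gcongr
  exact_mod_cast Nat.card_divisors_filter_squarefree_le_s6 _

/-- For every `ε > 0` there is `C > 0` such that for every prime `p`, every primitive root
`τ` mod `p`, and every integer `s` with `1 ≤ s ≤ p−1`:
`|∑_{1 ≤ n ≤ p−1, gcd(n,p−1)=1} e(s·τⁿ/p)| ≤ C · p^{1/2+ε} · log p`. -/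
theorem exponential_sum_coprime_indices_bound (ε : ℝ) (hε : 0 < ε) :
    ∃ C > (0:ℝ), ∀ p : ℕ, p.Prime →
      ∀ τ : ℤ, orderOf ((τ : ZMod p)) = p - 1 →
      ∀ s : ℤ, 1 ≤ s → s ≤ (p:ℤ) - 1 →
      ‖(∑ n ∈ (Finset.Icc 1 (p-1)).filter (fun n => Nat.gcd n (p-1) = 1),
          Complex.exp (2 * Real.pi * Complex.I * ((s:ℂ) * (τ:ℂ) ^ n / (p:ℂ))))‖
        ≤ C * (p:ℝ) ^ ((1:ℝ)/2 + ε) * Real.log p := by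
  obtain ⟨C, hC, two_pow_omega_le⟩ := Nat.exists_two_pow_card_primeFactors_le hε
  refine ⟨C / Real.log 2, by positivity, fun p hp τ hτ s hs₁ hs₂ => ?_⟩
  have := Fact.mk hp
  have hs : (s : ZMod p) ≠ 0 := by
    rw [Ne, ZMod.intCast_zmod_eq_zero_iff_dvd]
    exact fun hdvd => by linarith [Int.le_of_dvd (by omega) hdvd]
  have hp₀ : (0 : ℝ) < p := by exact_mod_cast hp.pos
  calc _ ≤ 2 ^ #(p - 1).primeFactors * √p := ZMod.norm_sum_coprime_exp_le hτ hs
    _ ≤ C * (p : ℝ) ^ ε * (p : ℝ) ^ ((1 : ℝ) / 2) := by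
        rw [Real.sqrt_eq_rpow]
        gcongr
        refine (two_pow_omega_le _ (by have := hp.two_le; omega)).trans ?_
        gcongr
        exact_mod_cast Nat.sub_le p 1
    _ = C / Real.log 2 * (p : ℝ) ^ ((1 : ℝ) / 2 + ε) * Real.log 2 := by
        rw [Real.rpow_add hp₀]
        field_simp
    _ ≤ C / Real.log 2 * (p : ℝ) ^ ((1 : ℝ) / 2 + ε) * Real.log p := by
        gcongr
        exact_mod_cast hp.two_le
end
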